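/- arXiv:math/0012128 — 7 statements merged into one kernel-verified Lean document; each statement's English description precedes it below -/
import Mathlib

section
/- Let X be a compact Hausdorff space and A a unital C(X)-algebra with structure map θ. For every a ∈ A and every x ∈ X, the distance from a to the fiber ideal I_x(A) is given by the formula dist(a, I_x(A)) = inf{ ‖(1 − θ(f) + f(x)·1)·a‖ : f ∈ C(X) }. -/
/-- The fiber ideal `I_x(A)` of a `C(X)`-algebra `A` with structure map `θ` at a point `x`:
the closed linear span of `{θ(f) * a : f ∈ C(X), f x = 0, a ∈ A}`. -/
def fiberIdeal {X : Type*} [TopologicalSpace X] {A : Type*} [NormedRing A] [StarRing A]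
    [NormedAlgebra ℂ A] (θ : C(X, ℂ) →⋆ₐ[ℂ] A) (x : X) : Set A :=
  closure (Submodule.span ℂ {y : A | ∃ (f : C(X, ℂ)) (b : A), f x = 0 ∧ y = θ f * b} : Set A)

/-- The fiber seminorm `‖a_x‖ := dist(a, I_x(A))`. -/
noncomputable def fiberNorm {X : Type*} [TopologicalSpace X] {A : Type*} [NormedRing A]
    [StarRing A] [NormedAlgebra ℂ A] (θ : C(X, ℂ) →⋆ₐ[ℂ] A) (x : X) (a : A) : ℝ :=
  Metric.infDist a (fiberIdeal θ x)

/-- Urysohn helper: given `f` vanishing at `x` and `δ > 0`, there is `g ∈ C(X,ℂ)` with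
`g x = 0`, `‖1 - g‖ ≤ 1` and `‖(1 - g) * f‖ ≤ δ`. -/
lemma fiber_urysohn {X : Type*} [TopologicalSpace X] [CompactSpace X] [T2Space X]
    (x : X) (f : C(X, ℂ)) (hf : f x = 0) {δ : ℝ} (hδ : 0 < δ) :
    ∃ g : C(X, ℂ), g x = 0 ∧ ‖(1 : C(X, ℂ)) - g‖ ≤ 1 ∧ ‖((1 : C(X, ℂ)) - g) * f‖ ≤ δ := by
  set U : Set X := {t | ‖f t‖ < δ} with hU
  have hUopen : IsOpen U := isOpen_lt (by fun_prop) continuous_const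
  have hxU : x ∈ U := by simp [hU, hf, hδ]
  obtain ⟨g₀, hg₀0, hg₀1, hg₀mem⟩ := exists_continuous_zero_one_of_isClosed
    (isClosed_singleton (x := x)) (hUopen.isClosed_compl)
    (by simpa using hxU)
  refine ⟨(⟨Complex.ofReal, Complex.continuous_ofReal⟩ : C(ℝ, ℂ)).comp g₀, ?_, ?_, ?_⟩
  · simp [hg₀0 rfl]
  · rw [ContinuousMap.norm_le _ zero_le_one]
    intro t
    have h := hg₀mem t
    simp only [ContinuousMap.sub_apply, ContinuousMap.one_apply, ContinuousMap.comp_apply,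
      ContinuousMap.coe_mk]
    rw [show (1 : ℂ) - (g₀ t : ℂ) = ((1 - g₀ t : ℝ) : ℂ) by push_cast; ring,
      Complex.norm_real, Real.norm_eq_abs]
    rw [abs_le]
    constructor <;> [linarith [h.2]; linarith [h.1]]
  · rw [ContinuousMap.norm_le _ hδ.le]
    intro t
    by_cases ht : t ∈ U
    · have h := hg₀mem t
      simp only [ContinuousMap.mul_apply, ContinuousMap.sub_apply, ContinuousMap.one_apply,
        ContinuousMap.comp_apply, ContinuousMap.coe_mk, norm_mul]
      have h1 : ‖(1 : ℂ) - (g₀ t : ℂ)‖ ≤ 1 := by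
        rw [show (1 : ℂ) - (g₀ t : ℂ) = ((1 - g₀ t : ℝ) : ℂ) by push_cast; ring,
          Complex.norm_real, Real.norm_eq_abs, abs_le]
        constructor <;> [linarith [h.2]; linarith [h.1]]
      calc ‖(1 : ℂ) - (g₀ t : ℂ)‖ * ‖f t‖ ≤ 1 * δ :=
            mul_le_mul h1 (le_of_lt ht) (norm_nonneg _) zero_le_one
        _ = δ := one_mul δ
    · have : g₀ t = 1 := hg₀1 ht
      simp [this, hδ.le]

/-- Ring identity used in the additive step of the approximate-unit argument. -/
lemma fiber_ring_aux {A : Type*} [Ring A] (p q y z : A) (h : p * q = q * p) :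
    (y + z) - (p + q - p * q) * (y + z)
      = (1 - q) * (y - p * y) + (1 - p) * (z - q * z) := by
  have : q * (p * y) = p * (q * y) := by
    rw [← mul_assoc, ← h, mul_assoc]
  simp only [sub_mul, add_mul, mul_sub, mul_add, one_mul, mul_assoc, this]
  abel

/-- Approximate-unit lemma: every element of the span of `{θ f * b : f x = 0}` is
approximately annihilated by `1 - θ g` with `g x = 0` and `‖1 - θ g‖ ≤ 1`. -/
lemma fiber_approx {X : Type*} [TopologicalSpace X] [CompactSpace X] [T2Space X]
    {A : Type*} [NormedRing A] [StarRing A] [NormedAlgebra ℂ A]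
    (θ : C(X, ℂ) →⋆ₐ[ℂ] A) (x : X) (hcontr : ∀ f : C(X, ℂ), ‖θ f‖ ≤ ‖f‖)
    {y : A} (hy : y ∈ Submodule.span ℂ {y : A | ∃ (f : C(X, ℂ)) (b : A), f x = 0 ∧ y = θ f * b})
    {ε : ℝ} (hε : 0 < ε) :
    ∃ g : C(X, ℂ), g x = 0 ∧ ‖(1 : A) - θ g‖ ≤ 1 ∧ ‖y - θ g * y‖ ≤ ε := by
  have hone : ∀ g : C(X, ℂ), ‖(1 : A) - θ g‖ ≤ ‖(1 : C(X, ℂ)) - g‖ := by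
    intro g
    have : (1 : A) - θ g = θ (1 - g) := by rw [map_sub, map_one]
    rw [this]; exact hcontr _
  have honele : ‖(1 : C(X, ℂ)) - (0 : C(X, ℂ))‖ ≤ 1 := by
    rw [sub_zero, ContinuousMap.norm_le _ zero_le_one]; intro t; simp
  induction hy using Submodule.span_induction generalizing ε with
  | mem y hy =>
    obtain ⟨f, b, hfx, rfl⟩ := hy
    have hδ : 0 < ε / (‖b‖ + 1) := by positivity
    obtain ⟨g, hgx, hg1, hgf⟩ := fiber_urysohn x f hfx hδ
    refine ⟨g, hgx, (hone g).trans hg1, ?_⟩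
    have key : θ f * b - θ g * (θ f * b) = θ ((1 - g) * f) * b := by
      rw [map_mul, map_sub, map_one]
      noncomm_ring
    rw [key]
    calc ‖θ ((1 - g) * f) * b‖ ≤ ‖θ ((1 - g) * f)‖ * ‖b‖ := norm_mul_le _ _
      _ ≤ (ε / (‖b‖ + 1)) * ‖b‖ :=
          mul_le_mul ((hcontr _).trans hgf) le_rfl (norm_nonneg _) hδ.le
      _ ≤ (ε / (‖b‖ + 1)) * (‖b‖ + 1) := by gcongr; linarith
      _ = ε := by field_simp
  | zero =>
    exact ⟨0, by simp, (hone 0).trans honele, by simp [hε.le]⟩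
  | add y z hy hz ihy ihz =>
    obtain ⟨g₁, hg₁x, hg₁n, hg₁⟩ := ihy (ε := ε / 2) (by positivity)
    obtain ⟨g₂, hg₂x, hg₂n, hg₂⟩ := ihz (ε := ε / 2) (by positivity)
    refine ⟨g₁ + g₂ - g₁ * g₂, by simp [hg₁x, hg₂x], ?_, ?_⟩
    · have key : (1 : A) - θ (g₁ + g₂ - g₁ * g₂) = ((1 : A) - θ g₁) * ((1 : A) - θ g₂) := by
        simp only [map_sub, map_add, map_mul]
        noncomm_ring
      rw [key]
      calc ‖((1 : A) - θ g₁) * ((1 : A) - θ g₂)‖ ≤ ‖(1 : A) - θ g₁‖ * ‖(1 : A) - θ g₂‖ :=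
            norm_mul_le _ _
        _ ≤ 1 * 1 := mul_le_mul hg₁n hg₂n (norm_nonneg _) zero_le_one
        _ = 1 := one_mul 1
    · have hcomm : θ g₁ * θ g₂ = θ g₂ * θ g₁ := by
        rw [← map_mul, ← map_mul, mul_comm]
      have key : (y + z) - θ (g₁ + g₂ - g₁ * g₂) * (y + z)
          = ((1 : A) - θ g₂) * (y - θ g₁ * y) + ((1 : A) - θ g₁) * (z - θ g₂ * z) := by
        rw [map_sub, map_add, map_mul]
        exact fiber_ring_aux _ _ _ _ hcomm
      rw [key]
      calc ‖((1 : A) - θ g₂) * (y - θ g₁ * y) + ((1 : A) - θ g₁) * (z - θ g₂ * z)‖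
          ≤ ‖((1 : A) - θ g₂) * (y - θ g₁ * y)‖ + ‖((1 : A) - θ g₁) * (z - θ g₂ * z)‖ :=
            norm_add_le _ _
        _ ≤ ‖(1 : A) - θ g₂‖ * ‖y - θ g₁ * y‖ + ‖(1 : A) - θ g₁‖ * ‖z - θ g₂ * z‖ :=
            add_le_add (norm_mul_le _ _) (norm_mul_le _ _)
        _ ≤ 1 * (ε / 2) + 1 * (ε / 2) := by
            gcongr <;> first
              | exact hg₂n | exact hg₁n | exact hg₁ | exact hg₂
              | exact norm_nonneg _
        _ = ε := by ring
  | smul c y hy ihy =>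
    obtain ⟨g, hgx, hgn, hg⟩ := ihy (ε := ε / (‖c‖ + 1)) (by positivity)
    refine ⟨g, hgx, hgn, ?_⟩
    have key : c • y - θ g * (c • y) = c • (y - θ g * y) := by
      rw [smul_sub, mul_smul_comm]
    rw [key, norm_smul]
    calc ‖c‖ * ‖y - θ g * y‖ ≤ ‖c‖ * (ε / (‖c‖ + 1)) := by
          gcongr
      _ ≤ (‖c‖ + 1) * (ε / (‖c‖ + 1)) := by gcongr; linarith
      _ = ε := by field_simp

/-- For a unital `C(X)`-algebra `A` over a compact Hausdorff space `X`, the distance of `a ∈ A`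
to the fiber ideal `I_x(A)` equals `inf { ‖(1 - θ(f) + f(x)·1) * a‖ : f ∈ C(X) }`. -/
theorem fiberNorm_eq_iInf {X : Type*} [TopologicalSpace X] [CompactSpace X] [T2Space X]
    {A : Type*} [NormedRing A] [StarRing A] [CStarRing A] [CompleteSpace A]
    [NormedAlgebra ℂ A] [StarModule ℂ A]
    (θ : C(X, ℂ) →⋆ₐ[ℂ] A) (hθ : ∀ (f : C(X, ℂ)) (a : A), θ f * a = a * θ f)
    (a : A) (x : X) :
    fiberNorm θ x a = ⨅ f : C(X, ℂ), ‖((1 : A) - θ f + f x • (1 : A)) * a‖ := by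
  show Metric.infDist a
      (closure (Submodule.span ℂ
        {y : A | ∃ (f : C(X, ℂ)) (b : A), f x = 0 ∧ y = θ f * b} : Set A))
      = ⨅ f : C(X, ℂ), ‖((1 : A) - θ f + f x • (1 : A)) * a‖
  letI : CStarAlgebra A :=
    { ‹NormedRing A›, ‹StarRing A›, ‹CStarRing A›, ‹CompleteSpace A›,
      ‹NormedAlgebra ℂ A›, ‹StarModule ℂ A› with }
  have hcontr : ∀ f : C(X, ℂ), ‖θ f‖ ≤ ‖f‖ := fun f => NonUnitalStarAlgHom.norm_apply_le θ f
  set S : Set A := (Submodule.span ℂ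
    {y : A | ∃ (f : C(X, ℂ)) (b : A), f x = 0 ∧ y = θ f * b} : Set A) with hS
  have hSne : S.Nonempty := ⟨0, Submodule.zero_mem _⟩
  rw [Metric.infDist_closure]
  have hbdd : BddBelow (Set.range fun f : C(X, ℂ) => ‖((1 : A) - θ f + f x • (1 : A)) * a‖) :=
    ⟨0, by rintro _ ⟨f, rfl⟩; exact norm_nonneg _⟩
  refine le_antisymm (le_ciInf fun f => ?_) ?_
  · -- infDist ≤ each term
    have hmem : θ (f - f x • 1) * a ∈ S := by
      apply Submodule.subset_span
      exact ⟨f - f x • 1, a, by simp, rfl⟩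
    have := Metric.infDist_le_dist_of_mem (x := a) hmem
    refine this.trans (le_of_eq ?_)
    rw [dist_eq_norm]
    congr 1
    rw [map_sub, map_smul, map_one]
    simp only [sub_mul, add_mul, one_mul, smul_mul_assoc]
    abel
  · -- iInf ≤ infDist
    refine le_of_forall_pos_le_add fun ε hε => ?_
    obtain ⟨y, hyS, hyd⟩ := (Metric.infDist_lt_iff hSne).mp
      (show Metric.infDist a S < Metric.infDist a S + ε / 2 by linarith [half_pos hε])
    obtain ⟨g, hgx, hgn, hg⟩ := fiber_approx θ x hcontr hyS (half_pos hε)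
    have hle : (⨅ f : C(X, ℂ), ‖((1 : A) - θ f + f x • (1 : A)) * a‖)
        ≤ ‖((1 : A) - θ g + g x • (1 : A)) * a‖ := ciInf_le hbdd g
    refine hle.trans ?_
    have h0 : ((1 : A) - θ g + g x • (1 : A)) * a = ((1 : A) - θ g) * a := by
      rw [hgx]; simp
    rw [h0]
    have hsplit : ((1 : A) - θ g) * a = ((1 : A) - θ g) * (a - y) + (y - θ g * y) := by
      rw [mul_sub, sub_mul, sub_mul, one_mul, one_mul]
      abel
    rw [hsplit]
    calc ‖((1 : A) - θ g) * (a - y) + (y - θ g * y)‖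
        ≤ ‖((1 : A) - θ g) * (a - y)‖ + ‖y - θ g * y‖ := norm_add_le _ _
      _ ≤ ‖(1 : A) - θ g‖ * ‖a - y‖ + ε / 2 := add_le_add (norm_mul_le _ _) hg
      _ ≤ 1 * ‖a - y‖ + ε / 2 :=
          add_le_add (mul_le_mul hgn le_rfl (norm_nonneg _) zero_le_one) le_rfl
      _ = dist a y + ε / 2 := by rw [one_mul, dist_eq_norm]
      _ ≤ Metric.infDist a S + ε / 2 + ε / 2 := by linarith [hyd.le]
      _ = Metric.infDist a S + ε := by ring
end

section
/- Let X be a nonempty compact Hausdorff space and A a unital C(X)-algebra. For every a ∈ A one has ‖a‖ = sup{ ‖a_x‖ : x ∈ X }, and this supremum is attained at some point of X. -/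
/-!
If every fiber norm of `a` were `< ‖a‖`, each point `x` would carry a function `g_x` equal to `1`
near `x` with `‖θ(g_x) a‖ < ‖a‖`: approximate `a` by `b` in the span of the generators
`θ(f) c`, `f x = 0`, of `I_x(A)`, and note that `θ(g) b` is small once `g` is supported where
all the `f` are small. Cover `X` by finitely many of the open sets `{g_x = 1}` and take
`w_i = θ(√φ_i)` for a subordinate partition of unity `φ_i`. As the `w_i` are central,
`a⋆a = ∑ w_i⋆ (g_i a)⋆ (g_i a) w_i ≤ (max ‖g_i a‖)² · 1`, so `‖a‖ ≤ max ‖g_i a‖ < ‖a‖`.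
-/

open Metric Set Filter Topology Function

theorem CStarAlgebra.norm_le_of_sum_star_mul_self_eq_one {A : Type*} [CStarAlgebra A]
    {ι : Type*} (s : Finset ι) {w b : ι → A} {a : A} {M : ℝ} (hM : 0 ≤ M)
    (hw : ∀ i ∈ s, ∀ c, Commute (w i) c) (hsum : ∑ i ∈ s, star (w i) * w i = 1)
    (hwa : ∀ i ∈ s, w i * a = w i * b i) (hb : ∀ i ∈ s, ‖b i‖ ≤ M) : ‖a‖ ≤ M := by
  let _ := CStarAlgebra.spectralOrder A
  have := CStarAlgebra.spectralOrderedRing A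
  have hlocal : ∀ i ∈ s, star a * (star (w i) * w i) * a ≤
      algebraMap ℝ A (M ^ 2) * (star (w i) * w i) := by
    intro i hi
    have hbM : star (b i) * b i ≤ algebraMap ℝ A (M ^ 2) := by
      rw [← CStarAlgebra.norm_le_iff_le_algebraMap _ (sq_nonneg M), CStarRing.norm_star_mul_self,
        ← sq]
      exact pow_le_pow_left₀ (norm_nonneg _) (hb i hi) 2
    calc star a * (star (w i) * w i) * a = star (w i * b i) * (w i * b i) := by
          rw [← hwa i hi, star_mul]; noncomm_ring
      _ = star (w i) * (star (b i) * b i) * w i := by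
          rw [star_mul, ← ((hw i hi) (b i)).star_star.eq, ((hw i hi) (b i)).eq]
          noncomm_ring
      _ ≤ star (w i) * algebraMap ℝ A (M ^ 2) * w i := star_left_conjugate_le_conjugate hbM _
      _ = algebraMap ℝ A (M ^ 2) * (star (w i) * w i) := by
          rw [mul_assoc, Algebra.commutes, ← mul_assoc, Algebra.commutes]
  have hsq : star a * a ≤ algebraMap ℝ A (M ^ 2) :=
    calc star a * a = ∑ i ∈ s, star a * (star (w i) * w i) * a := by
          rw [← Finset.sum_mul, ← Finset.mul_sum, hsum, mul_one]
      _ ≤ ∑ i ∈ s, algebraMap ℝ A (M ^ 2) * (star (w i) * w i) := Finset.sum_le_sum hlocal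
      _ = algebraMap ℝ A (M ^ 2) := by rw [← Finset.mul_sum, hsum, mul_one]
  rw [← CStarAlgebra.norm_le_iff_le_algebraMap _ (sq_nonneg M), CStarRing.norm_star_mul_self,
    ← sq] at hsq
  exact (pow_le_pow_iff_left₀ (norm_nonneg a) hM two_ne_zero).1 hsq

theorem PartitionOfUnity.exists_sum_star_mul_self_eq_one {ι X : Type*} [Fintype ι]
    [TopologicalSpace X] (φ : PartitionOfUnity ι X univ) :
    ∃ w : ι → C(X, ℂ), ∑ i, star (w i) * w i = 1 ∧ ∀ i, support (w i) ⊆ support (φ i) := by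
  refine ⟨fun i => ⟨fun y => (√(φ i y) : ℂ), by fun_prop⟩, ?_, fun i y hy h0 => hy (by simp [h0])⟩
  · ext y
    have := φ.sum_eq_one (mem_univ y)
    rw [finsum_eq_sum_of_fintype] at this
    simp [← Complex.ofReal_mul, Real.mul_self_sqrt (φ.nonneg _ y), ← Complex.ofReal_sum, this]

section ContinuousMap

variable {X : Type*} [TopologicalSpace X]

theorem ContinuousMap.mul_eq_self_of_eqOn_one {R : Type*} [MulZeroOneClass R]
    [TopologicalSpace R] [ContinuousMul R] {w g : C(X, R)} (h : EqOn g 1 (support w)) :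
    w * g = w := by
  ext y
  by_cases hy : w y = 0
  · simp [hy]
  · simp [h hy]

variable [CompactSpace X]

theorem ContinuousMap.norm_mul_le_of_support_subset {R : Type*} [NormedRing R] {g f : C(X, R)}
    {W : Set X} {δ : ℝ} (hg : ‖g‖ ≤ 1) (hgW : support g ⊆ W) (hf : ∀ y ∈ W, ‖f y‖ ≤ δ)
    (hδ : 0 ≤ δ) : ‖g * f‖ ≤ δ := by
  refine (ContinuousMap.norm_le _ hδ).2 fun y => ?_
  by_cases hy : g y = 0
  · simp [hy, hδ]
  · rw [ContinuousMap.mul_apply]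
    calc ‖g y * f y‖ ≤ ‖g y‖ * ‖f y‖ := norm_mul_le _ _
      _ ≤ 1 * δ := mul_le_mul ((g.norm_coe_le_norm y).trans hg) (hf y (hgW hy)) (norm_nonneg _)
          zero_le_one
      _ = δ := one_mul δ

theorem exists_norm_le_one_support_subset_eventually_eq_one [T2Space X] {x : X} {W : Set X}
    (hW : W ∈ 𝓝 x) : ∃ g : C(X, ℂ), ‖g‖ ≤ 1 ∧ support g ⊆ W ∧ ∀ᶠ y in 𝓝 x, g y = 1 := by
  obtain ⟨V, hV, hVc, hVW⟩ := exists_mem_nhds_isClosed_subset (interior_mem_nhds.2 hW)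
  obtain ⟨h, hsupp, h1, h01⟩ := exists_tsupport_one_of_isOpen_isClosed isOpen_interior
    isClosed_closure.isCompact hVc hVW
  refine ⟨⟨fun y => (h y : ℂ), by fun_prop⟩, (ContinuousMap.norm_le _ zero_le_one).2 fun y => ?_,
    fun y hy => interior_subset (hsupp (subset_tsupport _ (by simpa using hy))), ?_⟩
  · simpa [abs_le] using (show -1 ≤ h y ∧ h y ≤ 1 from ⟨by linarith [(h01 y).1], (h01 y).2⟩)
  · filter_upwards [hV] with y hy
    simp [h1 hy]

theorem exists_sum_star_mul_self_eq_one_of_cover [T2Space X] {U : X → Set X}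
    (hUo : ∀ x, IsOpen (U x)) (hxU : ∀ x, x ∈ U x) :
    ∃ (t : Finset X) (w : t → C(X, ℂ)), ∑ i, star (w i) * w i = 1 ∧ ∀ i, support (w i) ⊆ U i := by
  obtain ⟨t, ht⟩ := isCompact_univ.elim_finite_subcover U hUo fun x _ => mem_iUnion.2 ⟨x, hxU x⟩
  obtain ⟨φ, hφU⟩ := PartitionOfUnity.exists_isSubordinate isClosed_univ (fun i : t => U i)
    (fun i => hUo i) (by simpa [iUnion_subtype] using ht)
  obtain ⟨w, hw1, hwφ⟩ := φ.exists_sum_star_mul_self_eq_one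
  exact ⟨t, w, hw1, fun i => (hwφ i).trans ((subset_tsupport _).trans (hφU i))⟩

end ContinuousMap

theorem fiberNorm_le_norm {X : Type*} [TopologicalSpace X] {A : Type*} [NormedRing A]
    [StarRing A] [NormedAlgebra ℂ A] (θ : C(X, ℂ) →⋆ₐ[ℂ] A) (x : X) (a : A) :
    fiberNorm θ x a ≤ ‖a‖ := by
  have h0 : (0 : A) ∈ fiberIdeal θ x := subset_closure (zero_mem _)
  exact (infDist_le_dist_of_mem h0).trans_eq (dist_zero_right a)

section FiberNorm

variable {X : Type*} [TopologicalSpace X] [CompactSpace X] {A : Type*} [CStarAlgebra A]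

theorem exists_mem_nhds_norm_map_mul_le (θ : C(X, ℂ) →⋆ₐ[ℂ] A) {x : X} {b : A}
    (hb : b ∈ Submodule.span ℂ {y : A | ∃ (f : C(X, ℂ)) (c : A), f x = 0 ∧ y = θ f * c})
    {ε : ℝ} (hε : 0 < ε) :
    ∃ W ∈ 𝓝 x, ∀ g : C(X, ℂ), ‖g‖ ≤ 1 → support g ⊆ W → ‖θ g * b‖ ≤ ε := by
  induction hb using Submodule.span_induction generalizing ε with
  | mem y hy =>
    obtain ⟨f, c, hfx, rfl⟩ := hy
    have hδ : 0 < ε / (‖c‖ + 1) := by positivity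
    refine ⟨{y | ‖f y‖ < ε / (‖c‖ + 1)}, ?_, fun g hg hgW => ?_⟩
    · exact (isOpen_lt (by fun_prop) continuous_const).mem_nhds (by simpa [hfx] using hδ)
    calc ‖θ g * (θ f * c)‖ = ‖θ (g * f) * c‖ := by rw [map_mul, mul_assoc]
      _ ≤ ‖g * f‖ * ‖c‖ := (norm_mul_le _ _).trans <|
          mul_le_mul_of_nonneg_right (NonUnitalStarAlgHom.norm_apply_le θ _) (norm_nonneg c)
      _ ≤ ε / (‖c‖ + 1) * ‖c‖ := by
          gcongr
          exact ContinuousMap.norm_mul_le_of_support_subset hg hgW (fun y hy => le_of_lt hy) hδ.le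
      _ ≤ ε := by
          rw [div_mul_eq_mul_div, div_le_iff₀ (by positivity)]
          nlinarith [norm_nonneg c]
  | zero => exact ⟨univ, univ_mem, fun g _ _ => by simpa using hε.le⟩
  | add y z _ _ hy hz =>
    obtain ⟨V, hV, hVy⟩ := hy (half_pos hε)
    obtain ⟨W, hW, hWz⟩ := hz (half_pos hε)
    refine ⟨V ∩ W, inter_mem hV hW, fun g hg hgVW => ?_⟩
    calc ‖θ g * (y + z)‖ ≤ ‖θ g * y‖ + ‖θ g * z‖ := by rw [mul_add]; exact norm_add_le _ _
      _ ≤ ε / 2 + ε / 2 :=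
          add_le_add (hVy g hg (hgVW.trans inter_subset_left))
            (hWz g hg (hgVW.trans inter_subset_right))
      _ = ε := add_halves ε
  | smul r y _ hy =>
    obtain ⟨W, hW, hWy⟩ := hy (show 0 < ε / (‖r‖ + 1) by positivity)
    refine ⟨W, hW, fun g hg hgW => ?_⟩
    calc ‖θ g * (r • y)‖ = ‖r‖ * ‖θ g * y‖ := by rw [mul_smul_comm, norm_smul]
      _ ≤ ‖r‖ * (ε / (‖r‖ + 1)) := by gcongr; exact hWy g hg hgW
      _ ≤ ε := by
          rw [mul_div_assoc', div_le_iff₀ (by positivity)]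
          nlinarith [norm_nonneg r]

theorem exists_eventually_eq_one_norm_map_mul_le [T2Space X] (θ : C(X, ℂ) →⋆ₐ[ℂ] A) (x : X)
    (a : A) {ε : ℝ} (hε : 0 < ε) :
    ∃ g : C(X, ℂ), (∀ᶠ y in 𝓝 x, g y = 1) ∧ ‖θ g * a‖ ≤ fiberNorm θ x a + ε := by
  obtain ⟨b, hb, hab⟩ : ∃ b ∈ (Submodule.span ℂ
      {y : A | ∃ (f : C(X, ℂ)) (c : A), f x = 0 ∧ y = θ f * c} : Set A),
      dist a b < fiberNorm θ x a + ε / 2 := by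
    rw [← infDist_lt_iff ⟨0, zero_mem _⟩, ← infDist_closure]
    exact lt_add_of_pos_right _ (half_pos hε)
  obtain ⟨W, hW, hWb⟩ := exists_mem_nhds_norm_map_mul_le θ hb (half_pos hε)
  obtain ⟨g, hg, hgW, hg1⟩ := exists_norm_le_one_support_subset_eventually_eq_one hW
  refine ⟨g, hg1, ?_⟩
  calc ‖θ g * a‖ ≤ ‖θ g * (a - b)‖ + ‖θ g * b‖ := by
        simpa [mul_sub] using norm_add_le (θ g * (a - b)) (θ g * b)
    _ ≤ ‖a - b‖ + ε / 2 := by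
        gcongr
        · exact (norm_mul_le _ _).trans <| mul_le_of_le_one_left (norm_nonneg _) <|
            (NonUnitalStarAlgHom.norm_apply_le θ g).trans hg
        · exact hWb g hg hgW
    _ ≤ fiberNorm θ x a + ε := by rw [← dist_eq_norm]; linarith

end FiberNorm

/-- For a unital `C(X)`-algebra `A` over a nonempty compact Hausdorff space `X` and every
`a ∈ A`, the norm `‖a‖` is the supremum of the fiber seminorms `‖a_x‖`, and this supremum is
attained: `‖a‖` is the greatest element of `{‖a_x‖ : x ∈ X}`. -/
theorem isGreatest_fiberNorm {X : Type*} [TopologicalSpace X] [CompactSpace X] [T2Space X]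
    [Nonempty X] {A : Type*} [NormedRing A] [StarRing A] [CStarRing A] [CompleteSpace A]
    [NormedAlgebra ℂ A] [StarModule ℂ A]
    (θ : C(X, ℂ) →⋆ₐ[ℂ] A) (hθ : ∀ (f : C(X, ℂ)) (a : A), θ f * a = a * θ f)
    (a : A) :
    IsGreatest (Set.range fun x : X => fiberNorm θ x a) ‖a‖ := by
  let _ : CStarAlgebra A := { ‹NormedRing A›, ‹StarRing A›, ‹CStarRing A›, ‹NormedAlgebra ℂ A›,
    ‹StarModule ℂ A›, ‹CompleteSpace A› with }
  refine ⟨?_, forall_mem_range.2 fun x => fiberNorm_le_norm θ x a⟩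
  by_contra hmax
  have hlt (x : X) : fiberNorm θ x a < ‖a‖ :=
    (fiberNorm_le_norm θ x a).lt_of_ne fun h => hmax ⟨x, h⟩
  choose g hg1 hga using fun x =>
    exists_eventually_eq_one_norm_map_mul_le θ x a (half_pos (sub_pos.2 (hlt x)))
  choose U hU1 hUo hxU using fun x => eventually_nhds_iff.1 (hg1 x)
  obtain ⟨t, w, hw1, hwU⟩ := exists_sum_star_mul_self_eq_one_of_cover hUo hxU
  have hwg (i : t) : w i * g i = w i :=
    ContinuousMap.mul_eq_self_of_eqOn_one fun y hy => hU1 i y (hwU i hy)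
  obtain ⟨i₀, -, hi₀⟩ := Finset.univ.exists_max_image (fun i : t => ‖θ (g i) * a‖)
    (Finset.nonempty_of_sum_ne_zero (hw1 ▸ one_ne_zero))
  have hle := CStarAlgebra.norm_le_of_sum_star_mul_self_eq_one Finset.univ
    (w := fun i => θ (w i)) (b := fun i => θ (g i) * a) (a := a) (norm_nonneg _)
    (fun i _ c => hθ (w i) c) (by simp only [← map_star, ← map_mul, ← map_sum, hw1, map_one])
    (fun i _ => by rw [← mul_assoc, ← map_mul, hwg])
    (fun i _ => hi₀ i (Finset.mem_univ i))
  linarith [hga i₀, hlt i₀]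
end

section
/- Let X be a compact Hausdorff space and A a unital C(X)-algebra with structure map θ. In the C*-algebra C(X, A) of continuous functions from X to A (pointwise operations, supremum norm), the closed linear span of the set { x ↦ f(x)·a − θ(f)a : f ∈ C(X), a ∈ A } equals the set { F ∈ C(X, A) : F(x) ∈ I_x(A) for every x ∈ X }. -/
/-- For a unital `C(X)`-algebra `A` over a compact Hausdorff space `X`, the closed linear span in
`C(X, A)` of the functions `x ↦ f(x)·a − θ(f)a` (for `f ∈ C(X)`, `a ∈ A`) is exactly the set of
continuous functions `F : X → A` with `F(x) ∈ I_x(A)` for every `x`. -/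
theorem closure_span_eq_sections_of_fiberIdeals
    {X : Type*} [TopologicalSpace X] [CompactSpace X] [T2Space X]
    {A : Type*} [NormedRing A] [StarRing A] [CStarRing A] [CompleteSpace A]
    [NormedAlgebra ℂ A] [StarModule ℂ A]
    (θ : C(X, ℂ) →⋆ₐ[ℂ] A) (hθ : ∀ (f : C(X, ℂ)) (a : A), θ f * a = a * θ f) :
    closure (Submodule.span ℂ
        {F : C(X, A) | ∃ (f : C(X, ℂ)) (a : A),
          F = f • ContinuousMap.const X a - ContinuousMap.const X (θ f * a)} : Set C(X, A)) =
      {F : C(X, A) | ∀ x : X, F x ∈ fiberIdeal θ x} := by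
  classical
  set gens : Set C(X, A) := {F : C(X, A) | ∃ (f : C(X, ℂ)) (a : A),
      F = f • ContinuousMap.const X a - ContinuousMap.const X (θ f * a)} with hgens
  apply Set.Subset.antisymm
  · -- easy direction
    intro F hF x
    have hmaps : Set.MapsTo (fun G : C(X, A) => G x)
        ((Submodule.span ℂ gens : Submodule ℂ C(X, A)) : Set C(X, A)) (fiberIdeal θ x) := by
      intro G hG
      have hcl : fiberIdeal θ x =
          ((Submodule.span ℂ {y : A | ∃ (f : C(X, ℂ)) (b : A),
            f x = 0 ∧ y = θ f * b}).topologicalClosure : Set A) :=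
        (Submodule.topologicalClosure_coe _).symm
      rw [hcl]
      induction hG using Submodule.span_induction with
      | mem G hGmem =>
        obtain ⟨f, a, rfl⟩ := hGmem
        have hval : (f • ContinuousMap.const X a - ContinuousMap.const X (θ f * a)) x
            = θ (f x • 1 - f) * a := by
          rw [map_sub, map_smul, map_one, sub_mul, smul_mul_assoc, one_mul]
          simp [ContinuousMap.smul_apply']
        simp only [hval]
        exact Submodule.le_topologicalClosure _
          (Submodule.subset_span ⟨f x • 1 - f, a, by simp, rfl⟩)
      | zero => exact Submodule.zero_mem _
      | add a b _ _ iha ihb => exact Submodule.add_mem _ iha ihb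
      | smul c a _ ih => exact Submodule.smul_mem _ c ih
    have hclosed : IsClosed (fiberIdeal θ x) := isClosed_closure
    have := map_mem_closure (continuous_eval_const x) hF hmaps
    rwa [hclosed.closure_eq] at this
  · -- hard direction
    intro F hF
    -- the span is stable under multiplication by C(X, ℂ)
    have hsmul : ∀ (g : C(X, ℂ)) (G : C(X, A)), G ∈ Submodule.span ℂ gens →
        g • G ∈ Submodule.span ℂ gens := by
      intro g G hG
      induction hG using Submodule.span_induction with
      | mem G hGmem =>
        obtain ⟨f, a, rfl⟩ := hGmem
        have key : g • (f • ContinuousMap.const X a - ContinuousMap.const X (θ f * a)) =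
            ((g * f) • ContinuousMap.const X a - ContinuousMap.const X (θ (g * f) * a)) -
            (g • ContinuousMap.const X (θ f * a) -
              ContinuousMap.const X (θ g * (θ f * a))) := by
          ext y
          simp only [ContinuousMap.smul_apply', ContinuousMap.sub_apply,
            ContinuousMap.const_apply, ContinuousMap.mul_apply, map_mul, mul_smul, mul_assoc,
            smul_sub]
          abel
        rw [key]
        exact Submodule.sub_mem _ (Submodule.subset_span ⟨g * f, a, rfl⟩)
          (Submodule.subset_span ⟨g, θ f * a, rfl⟩)
      | zero => rw [smul_zero]; exact Submodule.zero_mem _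
      | add a b _ _ iha ihb => rw [smul_add]; exact Submodule.add_mem _ iha ihb
      | smul c G _ ih =>
        have : g • (c • G) = c • (g • G) := by
          ext y
          simp only [ContinuousMap.smul_apply', ContinuousMap.smul_apply]
          rw [smul_comm]
        rw [this]
        exact Submodule.smul_mem _ c ih
    -- every element of the fiber span is the value at x of some element of the span
    have hsection : ∀ (x : X) (s : A),
        s ∈ Submodule.span ℂ {y : A | ∃ (f : C(X, ℂ)) (b : A), f x = 0 ∧ y = θ f * b} →
        ∃ G ∈ Submodule.span ℂ gens, G x = s := by
      intro x s hs
      induction hs using Submodule.span_induction with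
      | mem s hsmem =>
        obtain ⟨f, b, hfx, rfl⟩ := hsmem
        refine ⟨ContinuousMap.const X (θ f * b) - f • ContinuousMap.const X b, ?_, ?_⟩
        · have h := Submodule.neg_mem (Submodule.span ℂ gens)
            (Submodule.subset_span (⟨f, b, rfl⟩ :
              (f • ContinuousMap.const X b - ContinuousMap.const X (θ f * b)) ∈ gens))
          rwa [neg_sub] at h
        · simp [ContinuousMap.smul_apply', hfx]
      | zero => exact ⟨0, Submodule.zero_mem _, rfl⟩
      | add a b _ _ iha ihb =>
        obtain ⟨G1, h1, e1⟩ := iha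
        obtain ⟨G2, h2, e2⟩ := ihb
        exact ⟨G1 + G2, Submodule.add_mem _ h1 h2, by simp [e1, e2]⟩
      | smul c a _ ih =>
        obtain ⟨G, h, e⟩ := ih
        exact ⟨c • G, Submodule.smul_mem _ c h, by simp [e]⟩
    rw [Metric.mem_closure_iff]
    intro ε hε
    have hε2 : 0 < ε / 2 := by positivity
    have hx : ∀ x : X, ∃ G ∈ Submodule.span ℂ gens, ‖F x - G x‖ < ε / 2 := by
      intro x
      have hFx := hF x
      rw [fiberIdeal, Metric.mem_closure_iff] at hFx
      obtain ⟨s, hs, hdist⟩ := hFx (ε / 2) hε2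
      obtain ⟨G, hG, hGx⟩ := hsection x s hs
      exact ⟨G, hG, by rw [hGx]; rwa [dist_eq_norm] at hdist⟩
    choose G hGmem hGlt using hx
    set U : X → Set X := fun x => {y | ‖F y - G x y‖ < ε / 2} with hU
    have hUopen : ∀ x, IsOpen (U x) :=
      fun x => isOpen_lt ((F.continuous.sub (G x).continuous).norm) continuous_const
    have hUcover : (Set.univ : Set X) ⊆ ⋃ x, U x :=
      fun y _ => Set.mem_iUnion.2 ⟨y, hGlt y⟩
    obtain ⟨t, ht⟩ := isCompact_univ.elim_finite_subcover U hUopen hUcover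
    have htcover : (Set.univ : Set X) ⊆ ⋃ i : t, U ↑i := by
      intro y hy
      obtain ⟨i, hi, hyi⟩ := Set.mem_iUnion₂.1 (ht hy)
      exact Set.mem_iUnion.2 ⟨⟨i, hi⟩, hyi⟩
    obtain ⟨pu, hpu⟩ := PartitionOfUnity.exists_isSubordinate isClosed_univ
      (fun i : t => U ↑i) (fun i => hUopen ↑i) htcover
    set c : t → C(X, ℂ) := fun i =>
      ⟨fun y => ((pu i y : ℝ) : ℂ), Complex.continuous_ofReal.comp (pu i).continuous⟩ with hc
    set Gc : C(X, A) := ∑ i : t, c i • G ↑i with hGc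
    refine ⟨Gc, Submodule.sum_mem _ fun i _ => hsmul (c i) _ (hGmem ↑i), ?_⟩
    rw [dist_eq_norm, ContinuousMap.norm_lt_iff _ hε]
    intro y
    have hsum1 : ∑ i : t, pu i y = 1 := by
      have h := pu.sum_eq_one (Set.mem_univ y)
      rwa [finsum_eq_sum_of_fintype] at h
    have hFy : F y = ∑ i : t, ((pu i y : ℝ) : ℂ) • F y := by
      rw [← Finset.sum_smul]
      have : (∑ i : t, ((pu i y : ℝ) : ℂ)) = 1 := by
        rw [← Complex.ofReal_sum, hsum1, Complex.ofReal_one]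
      rw [this, one_smul]
    have hGy : Gc y = ∑ i : t, ((pu i y : ℝ) : ℂ) • (G ↑i) y := by
      rw [hGc]
      rw [ContinuousMap.coe_sum]
      simp [ContinuousMap.smul_apply', hc]
    have key : (F - Gc) y = ∑ i : t, ((pu i y : ℝ) : ℂ) • (F y - (G ↑i) y) := by
      rw [ContinuousMap.sub_apply, hGy]
      conv_lhs => rw [hFy]
      rw [← Finset.sum_sub_distrib]
      simp [smul_sub]
    calc ‖(F - Gc) y‖ = ‖∑ i : t, ((pu i y : ℝ) : ℂ) • (F y - (G ↑i) y)‖ := by rw [key]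
      _ ≤ ∑ i : t, ‖((pu i y : ℝ) : ℂ) • (F y - (G ↑i) y)‖ := norm_sum_le _ _
      _ ≤ ∑ i : t, pu i y * (ε / 2) := by
          apply Finset.sum_le_sum
          intro i _
          rw [norm_smul, Complex.norm_real, Real.norm_eq_abs, abs_of_nonneg (pu.nonneg i y)]
          by_cases h : pu i y = 0
          · simp [h]
          · have hy : y ∈ U ↑i := hpu i (subset_tsupport _ (Function.mem_support.2 h))
            exact mul_le_mul_of_nonneg_left (le_of_lt hy) (pu.nonneg i y)
      _ = ε / 2 := by rw [← Finset.sum_mul, hsum1, one_mul]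
      _ < ε := by linarith
end

section
/- Let X be a compact Hausdorff space without isolated points and let A be a unital C(X)-algebra which is a continuous field of C*-algebras over X. Fix x ∈ X and a ∈ A. If a·(f·b) = 0 for every f ∈ C_x(X) and every b ∈ A, then a = 0. -/
/-- Let `X` be a compact Hausdorff space without isolated points and `A` a unital `C(X)`-algebra
which is a continuous field of C*-algebras over `X`. If `a ∈ A` satisfies `a·(f·b) = 0` for
every `f ∈ C(X)` vanishing at a given point `x` and every `b ∈ A`, then `a = 0`. -/
theorem eq_zero_of_annihilates_fiberIdeal
    {X : Type*} [TopologicalSpace X] [CompactSpace X] [T2Space X]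
    (hX : ∀ x : X, Filter.NeBot (nhdsWithin x {x}ᶜ))
    {A : Type*} [NormedRing A] [StarRing A] [CStarRing A] [CompleteSpace A]
    [NormedAlgebra ℂ A] [StarModule ℂ A]
    (θ : C(X, ℂ) →⋆ₐ[ℂ] A) (hθ : ∀ (f : C(X, ℂ)) (a : A), θ f * a = a * θ f)
    (hA : ∀ a : A, Continuous fun x : X => fiberNorm θ x a)
    (x : X) (a : A)
    (h : ∀ (f : C(X, ℂ)), f x = 0 → ∀ b : A, a * (θ f * b) = 0) :
    a = 0 := by
  classical
  -- `a` annihilates the whole fiber ideal at `x`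
  have hann : ∀ y ∈ fiberIdeal θ x, a * y = 0 := by
    intro y hy
    have hclosed : IsClosed {z : A | a * z = 0} :=
      isClosed_eq (continuous_const.mul continuous_id) continuous_const
    have hspan : (Submodule.span ℂ
        {y : A | ∃ (f : C(X, ℂ)) (b : A), f x = 0 ∧ y = θ f * b} : Set A) ⊆
        {z : A | a * z = 0} := by
      intro z hz
      induction hz using Submodule.span_induction with
      | mem z hz => obtain ⟨f, b, hf, rfl⟩ := hz; exact h f hf b
      | zero => simp
      | add u v _ _ hu hv => simp only [Set.mem_setOf_eq] at *; rw [mul_add, hu, hv, add_zero]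
      | smul c u _ hu => simp only [Set.mem_setOf_eq] at *; rw [mul_smul_comm, hu, smul_zero]
    exact closure_minimal hspan hclosed hy
  -- the fiber seminorm of `a` vanishes at every point `y ≠ x`
  have hzero : ∀ y : X, y ≠ x → fiberNorm θ y a = 0 := by
    intro y hy
    obtain ⟨f, hf0, hf1, -⟩ := exists_continuous_zero_one_of_isClosed
      (isClosed_singleton (x := x)) (isClosed_singleton (x := y))
      (by simp [Set.disjoint_singleton, Ne.symm hy])
    set F : C(X, ℂ) := (ContinuousMap.mk (fun r : ℝ => (r : ℂ)) Complex.continuous_ofReal).comp f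
      with hF
    have hFx : F x = 0 := by simp [hF, hf0 rfl]
    have hFy : F y = 1 := by simp [hF, hf1 rfl]
    have haF : a * θ F = 0 := by
      have := h F hFx 1
      simpa using this
    have hgen : a = θ (1 - F) * a := by
      have h1 : θ (1 : C(X, ℂ)) = 1 := map_one θ
      rw [map_sub, sub_mul, h1, one_mul, hθ, haF, sub_zero]
    have hmem : a ∈ fiberIdeal θ y := by
      apply subset_closure
      apply Submodule.subset_span
      exact ⟨1 - F, a, by simp [hFy], hgen⟩
    exact Metric.infDist_zero_of_mem hmem
  -- by continuity and non-isolatedness, the fiber seminorm also vanishes at `x`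
  have hfx : fiberNorm θ x a = 0 := by
    haveI := hX x
    have h1 : Filter.Tendsto (fun y : X => fiberNorm θ y a) (nhdsWithin x {x}ᶜ)
        (nhds (fiberNorm θ x a)) := ((hA a).continuousAt).continuousWithinAt
    have h2 : Filter.Tendsto (fun y : X => fiberNorm θ y a) (nhdsWithin x {x}ᶜ)
        (nhds 0) := by
      apply Filter.Tendsto.congr' _ tendsto_const_nhds
      filter_upwards [self_mem_nhdsWithin] with y hy
      exact (hzero y hy).symm
    exact tendsto_nhds_unique h1 h2
  -- hence `a` lies in the fiber ideal at `x`
  have hmemx : a ∈ fiberIdeal θ x := by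
    have hne : (fiberIdeal θ x).Nonempty :=
      ⟨0, subset_closure (Submodule.zero_mem _)⟩
    have := (Metric.mem_closure_iff_infDist_zero hne).mpr hfx
    simp only [fiberIdeal] at this ⊢
    rwa [closure_closure] at this
  -- the fiber ideal is star-invariant, so `star a` is also in it
  have hstarmem : star a ∈ fiberIdeal θ x := by
    set S : Set A := {y : A | ∃ (f : C(X, ℂ)) (b : A), f x = 0 ∧ y = θ f * b} with hS
    set J : Submodule ℂ A := (Submodule.span ℂ S).topologicalClosure with hJ
    have hJeq : (J : Set A) = fiberIdeal θ x := rfl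
    have key : ∀ z ∈ Submodule.span ℂ S, star z ∈ J := by
      intro z hz
      induction hz using Submodule.span_induction with
      | mem z hz =>
          obtain ⟨f, b, hf, rfl⟩ := hz
          apply Submodule.le_topologicalClosure
          apply Submodule.subset_span
          refine ⟨star f, star b, ?_, ?_⟩
          · show star (f x) = 0
            rw [hf, star_zero]
          · rw [star_mul, ← map_star θ f, hθ]
      | zero => simp only [star_zero]; exact J.zero_mem
      | add u v _ _ hu hv => rw [star_add]; exact J.add_mem hu hv
      | smul c u _ hu => rw [star_smul]; exact J.smul_mem _ hu
    have hsub : star '' (Submodule.span ℂ S : Set A) ⊆ (J : Set A) := by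
      rintro _ ⟨z, hz, rfl⟩; exact key z hz
    have hcont : star a ∈ closure (star '' (Submodule.span ℂ S : Set A)) := by
      have : a ∈ closure (Submodule.span ℂ S : Set A) := hmemx
      have himg := Set.mem_image_of_mem star this
      exact (continuous_star.continuousOn.image_closure (s := (Submodule.span ℂ S : Set A))) himg
    have := closure_minimal hsub (by rw [hJ]; exact (Submodule.span ℂ S).isClosed_topologicalClosure) hcont
    rwa [hJeq] at this
  -- conclude by the C*-identity
  have h0 : a * star a = 0 := hann (star a) hstarmem
  have : ‖a‖ * ‖a‖ = 0 := by
    rw [← CStarRing.norm_self_mul_star, h0, norm_zero]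
  have hnorm : ‖a‖ = 0 := by nlinarith [norm_nonneg a]
  exact norm_eq_zero.mp hnorm
end

section
/- Let X be a compact Hausdorff space and A a unital C(X)-algebra. Let n ≥ 1 and let w_1, …, w_n ∈ A be isometries with pairwise orthogonal ranges, i.e. w_i* w_j = 1 if i = j and w_i* w_j = 0 if i ≠ j. Let F ⊆ A be a set of elements each of which commutes with every w_i, let V : F → A be any function, let ε > 0, let U_1, …, U_n be open sets covering X, and let g_1, …, g_n ∈ A with ‖g_i‖ ≤ 1 be such that ‖(V(d) − g_i* d g_i)_x‖ < ε for every d ∈ F, every i ∈ {1,…,n} and every x ∈ U_i. Then there exists a ∈ A with a*a ≤ 1 such that ‖(V(d) − a* d a)_x‖ < ε for every d ∈ F and every x ∈ X. -/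
open Metric

section auxInfDist
variable {E : Type*} [SeminormedAddCommGroup E] [NormedSpace ℂ E] (J : Submodule ℂ E)

lemma aux_infDist_add_le (a b : E) :
    infDist (a + b) (J : Set E) ≤ infDist a (J : Set E) + infDist b (J : Set E) := by
  have hne : (J : Set E).Nonempty := ⟨0, J.zero_mem⟩
  refine le_of_forall_pos_le_add fun ε hε => ?_
  obtain ⟨y, hy, hy'⟩ := (infDist_lt_iff hne).mp
    (lt_add_of_pos_right (infDist a (J : Set E)) (half_pos hε))
  obtain ⟨z, hz, hz'⟩ := (infDist_lt_iff hne).mp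
    (lt_add_of_pos_right (infDist b (J : Set E)) (half_pos hε))
  calc infDist (a + b) (J : Set E) ≤ dist (a + b) (y + z) :=
        infDist_le_dist_of_mem (J.add_mem hy hz)
    _ ≤ dist a y + dist b z := dist_add_add_le _ _ _ _
    _ ≤ _ := by linarith

lemma aux_infDist_smul_le (c : ℂ) (a : E) :
    infDist (c • a) (J : Set E) ≤ ‖c‖ * infDist a (J : Set E) := by
  have hne : (J : Set E).Nonempty := ⟨0, J.zero_mem⟩
  rcases eq_or_ne c 0 with rfl | hc
  · simp [infDist_zero_of_mem J.zero_mem]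
  · refine le_of_forall_pos_le_add fun ε hε => ?_
    have hcpos : 0 < ‖c‖ := norm_pos_iff.mpr hc
    obtain ⟨y, hy, hy'⟩ := (infDist_lt_iff hne).mp
      (lt_add_of_pos_right (infDist a (J : Set E)) (div_pos hε hcpos))
    calc infDist (c • a) (J : Set E) ≤ dist (c • a) (c • y) :=
          infDist_le_dist_of_mem (J.smul_mem c hy)
      _ = ‖c‖ * dist a y := by
          rw [dist_eq_norm, dist_eq_norm, ← smul_sub, norm_smul]
      _ ≤ ‖c‖ * (infDist a (J : Set E) + ε / ‖c‖) :=
          mul_le_mul_of_nonneg_left hy'.le hcpos.le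
      _ = ‖c‖ * infDist a (J : Set E) + ε := by rw [mul_add, mul_div_cancel₀ _ hcpos.ne']

lemma aux_infDist_sum_le {ι : Type*} (s : Finset ι) (f : ι → E) :
    infDist (∑ i ∈ s, f i) (J : Set E) ≤ ∑ i ∈ s, infDist (f i) (J : Set E) := by
  classical
  induction s using Finset.cons_induction with
  | empty => simp [infDist_zero_of_mem J.zero_mem]
  | cons i s his ih =>
      rw [Finset.sum_cons, Finset.sum_cons]
      exact (aux_infDist_add_le J _ _).trans (by linarith)

end auxInfDist

section auxFiber
variable {X : Type*} [TopologicalSpace X] {A : Type*} [NormedRing A] [StarRing A]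
  [NormedAlgebra ℂ A] (θ : C(X, ℂ) →⋆ₐ[ℂ] A) (x : X)

/-- The fiber ideal as a (topologically closed) submodule. -/
noncomputable def fiberSubmodule : Submodule ℂ A :=
  (Submodule.span ℂ {y : A | ∃ (f : C(X, ℂ)) (b : A), f x = 0 ∧ y = θ f * b}).topologicalClosure

lemma fiberIdeal_eq_coe : fiberIdeal θ x = (fiberSubmodule θ x : Set A) :=
  (Submodule.topologicalClosure_coe _).symm

lemma mem_fiberSubmodule {f : C(X, ℂ)} (hf : f x = 0) (b : A) :
    θ f * b ∈ fiberSubmodule θ x :=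
  Submodule.le_topologicalClosure _ (Submodule.subset_span ⟨f, b, hf, rfl⟩)

lemma fiberNorm_nonneg (a : A) : 0 ≤ fiberNorm θ x a := infDist_nonneg

lemma fiberNorm_sum_le {ι : Type*} (s : Finset ι) (f : ι → A) :
    fiberNorm θ x (∑ i ∈ s, f i) ≤ ∑ i ∈ s, fiberNorm θ x (f i) := by
  simp only [fiberNorm, fiberIdeal_eq_coe]
  exact aux_infDist_sum_le _ s f

lemma fiberNorm_theta_mul_le (f : C(X, ℂ)) (b : A) :
    fiberNorm θ x (θ f * b) ≤ ‖f x‖ * fiberNorm θ x b := by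
  have h1 : θ f * b = θ (f - algebraMap ℂ C(X, ℂ) (f x)) * b + f x • b := by
    rw [map_sub, sub_mul, AlgHomClass.commutes, ← Algebra.smul_def]
    abel
  simp only [fiberNorm, fiberIdeal_eq_coe]
  rw [h1]
  refine (aux_infDist_add_le (fiberSubmodule θ x) _ _).trans ?_
  rw [infDist_zero_of_mem (mem_fiberSubmodule θ x (by simp) b), zero_add]
  exact aux_infDist_smul_le _ _ _

end auxFiber

/-- Gluing lemma used for corollary 2.3: if `w₁, …, wₙ ∈ A` are isometries with pairwise
orthogonal ranges commuting with every element of `F`, `U₁, …, Uₙ` is an open cover of `X`,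
and `g₁, …, gₙ` are contractions with `‖(V(d) − gᵢ* d gᵢ)_x‖ < ε` for `x ∈ Uᵢ` and `d ∈ F`,
then there is a single `a ∈ A` with `a*a ≤ 1` and `‖(V(d) − a* d a)_x‖ < ε` for all `d ∈ F`
and all `x ∈ X`. -/
theorem exists_glued_contraction
    {X : Type*} [TopologicalSpace X] [CompactSpace X] [T2Space X]
    {A : Type*} [NormedRing A] [StarRing A] [CStarRing A] [CompleteSpace A]
    [NormedAlgebra ℂ A] [StarModule ℂ A] [PartialOrder A] [StarOrderedRing A]
    (θ : C(X, ℂ) →⋆ₐ[ℂ] A) (hθ : ∀ (f : C(X, ℂ)) (a : A), θ f * a = a * θ f)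
    (n : ℕ) (hn : 1 ≤ n) (w : Fin n → A)
    (hw : ∀ i j : Fin n, star (w i) * w j = if i = j then (1 : A) else 0)
    (F : Set A) (hcomm : ∀ d ∈ F, ∀ i : Fin n, Commute d (w i))
    (V : A → A) (ε : ℝ) (hε : 0 < ε)
    (U : Fin n → Set X) (hUopen : ∀ i, IsOpen (U i)) (hUcover : ∀ x : X, ∃ i, x ∈ U i)
    (g : Fin n → A) (hg : ∀ i, ‖g i‖ ≤ 1)
    (hloc : ∀ d ∈ F, ∀ i : Fin n, ∀ x ∈ U i,
      fiberNorm θ x (V d - star (g i) * d * g i) < ε) :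
    ∃ a : A, star a * a ≤ 1 ∧
      ∀ d ∈ F, ∀ x : X, fiberNorm θ x (V d - star a * d * a) < ε := by
  classical
  letI : CStarAlgebra A := ⟨⟩
  -- partition of unity subordinate to U
  have hcover : (Set.univ : Set X) ⊆ ⋃ i, U i := fun x _ => Set.mem_iUnion.mpr (hUcover x)
  obtain ⟨p, hp⟩ := PartitionOfUnity.exists_isSubordinate isClosed_univ U hUopen hcover
  have hpsum : ∀ x : X, ∑ i, p i x = 1 := fun x => by
    rw [← finsum_eq_sum_of_fintype]
    exact p.sum_eq_one (Set.mem_univ x)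
  -- complex square roots
  set k : Fin n → C(X, ℂ) := fun i =>
    ⟨fun x => ((Real.sqrt (p i x) : ℝ) : ℂ),
      Complex.continuous_ofReal.comp (Real.continuous_sqrt.comp (p i).continuous)⟩ with hk
  have hk_star : ∀ i, star (k i) = k i := by
    intro i
    ext x
    simp [hk, Complex.conj_ofReal]
  have hθk_star : ∀ i, star (θ (k i)) = θ (k i) := fun i => by
    rw [← map_star, hk_star]
  have hkk : ∀ i (x : X), (k i * k i) x = ((p i x : ℝ) : ℂ) := by
    intro i x
    simp only [hk, ContinuousMap.mul_apply, ContinuousMap.coe_mk, ← Complex.ofReal_mul,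
      Real.mul_self_sqrt (p.nonneg i x)]
  have hksum : (∑ i, k i * k i) = 1 := by
    ext x
    simp only [ContinuousMap.sum_apply, hkk, ContinuousMap.one_apply, ← Complex.ofReal_sum,
      hpsum x, Complex.ofReal_one]
  have hθsum : ∑ i, θ (k i * k i) = 1 := by
    rw [← map_sum, hksum, map_one]
  -- centrality helper
  have hc : ∀ (f : C(X, ℂ)) (b c : A), c * (θ f * b) = θ f * (c * b) := fun f b c => by
    rw [← mul_assoc, ← hθ, mul_assoc]
  set a := ∑ i, w i * θ (k i) * g i with ha
  have hstar_a : star a = ∑ i, star (g i) * θ (k i) * star (w i) := by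
    rw [ha, star_sum]
    refine Finset.sum_congr rfl fun i _ => ?_
    rw [star_mul, star_mul, hθk_star, mul_assoc]
  -- key computation
  have key : ∀ d : A, (∀ i, d * w i = w i * d) →
      star a * d * a = ∑ i, θ (k i * k i) * (star (g i) * d * g i) := by
    intro d hd
    rw [hstar_a, ha, Finset.sum_mul, Finset.sum_mul]
    simp only [Finset.mul_sum]
    have hterm : ∀ i j, star (g i) * θ (k i) * star (w i) * d * (w j * θ (k j) * g j)
        = if i = j then θ (k i * k i) * (star (g i) * d * g i) else 0 := by
      intro i j
      have h1 : ∀ z : A,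
          star (w i) * (d * (w j * z)) = (if i = j then (1 : A) else 0) * (d * z) := by
        intro z
        rw [← mul_assoc d, hd j, mul_assoc (w j), ← mul_assoc, hw i j]
      calc star (g i) * θ (k i) * star (w i) * d * (w j * θ (k j) * g j)
          = star (g i) * (θ (k i) * (star (w i) * (d * (w j * (θ (k j) * g j))))) := by
            simp only [mul_assoc]
        _ = star (g i) * (θ (k i) * ((if i = j then (1:A) else 0) * (d * (θ (k j) * g j)))) := by
            rw [h1]
        _ = if i = j then θ (k i * k i) * (star (g i) * d * g i) else 0 := by
            split_ifs with hij
            · subst hij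
              rw [one_mul, hc (k i) (g i) d, hc (k i) (θ (k i) * (d * g i)) (star (g i)),
                hc (k i) (d * g i) (star (g i)), map_mul, mul_assoc,
                mul_assoc (star (g i)) d (g i)]
            · simp
    calc (∑ i, ∑ j, star (g i) * θ (k i) * star (w i) * d * (w j * θ (k j) * g j))
        = ∑ i, ∑ j, if i = j then θ (k i * k i) * (star (g i) * d * g i) else 0 :=
          Finset.sum_congr rfl fun i _ => Finset.sum_congr rfl fun j _ => hterm i j
      _ = ∑ i, θ (k i * k i) * (star (g i) * d * g i) := by
          refine Finset.sum_congr rfl fun i _ => ?_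
          rw [Finset.sum_ite_eq]
          simp
  -- contraction property
  have hgg : ∀ i, (0 : A) ≤ 1 - star (g i) * g i := fun i => by
    rw [sub_nonneg, ← CStarAlgebra.norm_le_one_iff_of_nonneg _ (star_mul_self_nonneg (g i))]
    calc ‖star (g i) * g i‖ = ‖g i‖ * ‖g i‖ := CStarRing.norm_star_mul_self
      _ ≤ 1 := by nlinarith [norm_nonneg (g i), hg i]
  have h1le : star a * a ≤ 1 := by
    have hkey := key 1 (fun i => by rw [one_mul, mul_one])
    simp only [mul_one, one_mul] at hkey
    rw [hkey]
    rw [← hθsum]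
    refine Finset.sum_le_sum fun i _ => ?_
    have heq : θ (k i * k i) - θ (k i * k i) * (star (g i) * g i)
        = star (θ (k i)) * (1 - star (g i) * g i) * θ (k i) := by
      calc θ (k i * k i) - θ (k i * k i) * (star (g i) * g i)
          = (1 - star (g i) * g i) * θ (k i * k i) := by
            rw [sub_mul, one_mul, ← hθ]
        _ = (1 - star (g i) * g i) * (θ (k i) * θ (k i)) := by rw [map_mul]
        _ = star (θ (k i)) * (1 - star (g i) * g i) * θ (k i) := by
            rw [hθk_star, ← mul_assoc, ← hθ, mul_assoc]
    have := star_left_conjugate_nonneg (hgg i) (θ (k i))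
    rw [← heq] at this
    exact sub_nonneg.mp this
  refine ⟨a, h1le, ?_⟩
  intro d hd x
  have hkey := key d (fun i => (hcomm d hd i).eq)
  have hdecomp : V d - star a * d * a
      = ∑ i, θ (k i * k i) * (V d - star (g i) * d * g i) := by
    rw [hkey]
    have : ∑ i, θ (k i * k i) * (V d - star (g i) * d * g i)
        = (∑ i, θ (k i * k i)) * V d - ∑ i, θ (k i * k i) * (star (g i) * d * g i) := by
      simp only [mul_sub]
      rw [Finset.sum_sub_distrib, Finset.sum_mul]
    rw [this, hθsum, one_mul]
  rw [hdecomp]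
  -- pick an index with positive weight at x
  obtain ⟨i0, hi0⟩ : ∃ i0, 0 < p i0 x := by
    by_contra h
    push_neg at h
    have h0 : ∑ i, p i x = 0 :=
      Finset.sum_eq_zero fun i _ => le_antisymm (h i) (p.nonneg i x)
    rw [hpsum x] at h0
    norm_num at h0
  -- per-term bounds
  have hle : ∀ i, fiberNorm θ x (θ (k i * k i) * (V d - star (g i) * d * g i))
      ≤ p i x * fiberNorm θ x (V d - star (g i) * d * g i) := by
    intro i
    have h := fiberNorm_theta_mul_le θ x (k i * k i) (V d - star (g i) * d * g i)
    rwa [hkk i x, Complex.norm_real, Real.norm_of_nonneg (p.nonneg i x)] at h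
  have hstrict : ∀ i, 0 < p i x →
      fiberNorm θ x (θ (k i * k i) * (V d - star (g i) * d * g i)) < p i x * ε := by
    intro i hpi
    have hxU : x ∈ U i := hp i (subset_tsupport _ (by simpa using hpi.ne'))
    exact (hle i).trans_lt (mul_lt_mul_of_pos_left (hloc d hd i x hxU) hpi)
  have hweak : ∀ i, fiberNorm θ x (θ (k i * k i) * (V d - star (g i) * d * g i))
      ≤ p i x * ε := by
    intro i
    rcases lt_or_eq_of_le (p.nonneg i x) with hpi | hpi
    · exact (hstrict i hpi).le
    · calc fiberNorm θ x (θ (k i * k i) * (V d - star (g i) * d * g i))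
          ≤ p i x * fiberNorm θ x (V d - star (g i) * d * g i) := hle i
        _ = 0 := by rw [← hpi, zero_mul]
        _ ≤ p i x * ε := by rw [← hpi, zero_mul]
  calc fiberNorm θ x (∑ i, θ (k i * k i) * (V d - star (g i) * d * g i))
      ≤ ∑ i, fiberNorm θ x (θ (k i * k i) * (V d - star (g i) * d * g i)) :=
        fiberNorm_sum_le θ x Finset.univ _
    _ < ∑ i, p i x * ε :=
        Finset.sum_lt_sum (fun i _ => hweak i)
          ⟨i0, Finset.mem_univ i0, hstrict i0 hi0⟩
    _ = ε := by rw [← Finset.sum_mul, hpsum x, one_mul]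
end

section
/- Let X be a compact Hausdorff space, D a unital C(X)-algebra, and B ⊆ D a norm-closed two-sided ideal of D. Then for every x ∈ X, the intersection B ∩ I_x(D) equals the closed linear span of { f·b : f ∈ C_x(X), b ∈ B }. (Consequently a C(X)-extension 0 → B → D → D/B → 0 induces, for every x ∈ X, an extension of the fibers at x.) -/
/-- Urysohn-type cutoff: given finitely many functions vanishing at `x` and `δ > 0`,
there is `e : C(X, ℂ)` with `e x = 0`, `‖1 - e‖ ≤ 1`, and `‖(1 - e) * F i‖ ≤ δ`. -/
lemma exists_cutoff {X : Type*} [TopologicalSpace X] [CompactSpace X] [T2Space X]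
    (x : X) {n : ℕ} (F : Fin n → C(X, ℂ)) (hF : ∀ i, F i x = 0)
    {δ : ℝ} (hδ : 0 < δ) :
    ∃ e : C(X, ℂ), e x = 0 ∧ ‖(1 : C(X, ℂ)) - e‖ ≤ 1 ∧
      ∀ i, ‖((1 : C(X, ℂ)) - e) * F i‖ ≤ δ := by
  set K : Set X := ⋃ i, {y | δ ≤ ‖F i y‖} with hK
  have hKclosed : IsClosed K := by
    apply isClosed_iUnion_of_finite
    intro i
    exact isClosed_le continuous_const ((F i).continuous.norm)
  have hxK : x ∉ K := by
    simp only [hK, Set.mem_iUnion, Set.mem_setOf_eq, not_exists, not_le]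
    intro i
    simp [hF i, hδ]
  obtain ⟨u, hu0, hu1, huIcc⟩ := exists_continuous_zero_one_of_isClosed
    (isClosed_singleton (x := x)) hKclosed (by simpa [Set.disjoint_left] using hxK)
  set e0 : C(X, ℂ) := ⟨fun y => ((u y : ℝ) : ℂ), Complex.continuous_ofReal.comp u.continuous⟩
    with he0
  have he0y : ∀ y, e0 y = ((u y : ℝ) : ℂ) := fun y => rfl
  have hsub : ∀ y, ((1 : C(X, ℂ)) - e0) y = ((1 - u y : ℝ) : ℂ) := by
    intro y
    rw [ContinuousMap.sub_apply, ContinuousMap.one_apply, he0y]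
    push_cast
    ring
  have hnorm1e : ∀ y, ‖((1 : C(X, ℂ)) - e0) y‖ ≤ 1 := by
    intro y
    have h1 : (0 : ℝ) ≤ u y := (huIcc y).1
    have h2 : u y ≤ 1 := (huIcc y).2
    rw [hsub y, Complex.norm_real, Real.norm_eq_abs, abs_of_nonneg (by linarith)]
    linarith
  refine ⟨e0, ?_, ?_, ?_⟩
  · rw [he0y, hu0 rfl]
    simp
  · rw [ContinuousMap.norm_le _ zero_le_one]
    exact hnorm1e
  · intro i
    rw [ContinuousMap.norm_le _ hδ.le]
    intro y
    rw [ContinuousMap.mul_apply]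
    rcases le_or_gt δ ‖F i y‖ with h | h
    · have hyK : y ∈ K := Set.mem_iUnion.mpr ⟨i, h⟩
      have hu : u y = 1 := hu1 hyK
      rw [hsub y, hu]
      simp [hδ.le]
    · calc ‖((1 : C(X, ℂ)) - e0) y * F i y‖ = ‖((1 : C(X, ℂ)) - e0) y‖ * ‖F i y‖ :=
            norm_mul _ _
        _ ≤ 1 * δ := mul_le_mul (hnorm1e y) h.le (norm_nonneg _) zero_le_one
        _ = δ := one_mul δ

/-- Let `D` be a unital `C(X)`-algebra over a compact Hausdorff space `X` and `B` a norm-closed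
two-sided ideal of `D`. Then `B ∩ I_x(D)` is the closed linear span of
`{θ(f)·b : f ∈ C(X), f x = 0, b ∈ B}`, for every `x ∈ X`. -/
theorem ideal_inter_fiberIdeal
    {X : Type*} [TopologicalSpace X] [CompactSpace X] [T2Space X]
    {D : Type*} [NormedRing D] [StarRing D] [CStarRing D] [CompleteSpace D]
    [NormedAlgebra ℂ D] [StarModule ℂ D]
    (θ : C(X, ℂ) →⋆ₐ[ℂ] D) (hθ : ∀ (f : C(X, ℂ)) (d : D), θ f * d = d * θ f)
    (B : TwoSidedIdeal D) (hBclosed : IsClosed (B : Set D)) (x : X) :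
    (B : Set D) ∩ fiberIdeal θ x =
      closure (Submodule.span ℂ
        {y : D | ∃ (f : C(X, ℂ)), ∃ b ∈ B, f x = 0 ∧ y = θ f * b} : Set D) := by
  letI : CStarAlgebra D := ⟨⟩
  apply Set.Subset.antisymm
  · -- hard direction
    rintro d ⟨hdB, hdI⟩
    rw [Metric.mem_closure_iff]
    intro ε hε
    rw [fiberIdeal, Metric.mem_closure_iff] at hdI
    obtain ⟨s, hs, hds⟩ := hdI (ε / 2) (by positivity)
    rw [SetLike.mem_coe, Submodule.mem_span_set'] at hs
    obtain ⟨n, c, g, hsum⟩ := hs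
    choose f a hfx hfa using fun i => (g i).2
    -- absorb scalars
    set F : Fin n → C(X, ℂ) := fun i => c i • f i with hFdef
    have hFx : ∀ i, F i x = 0 := fun i => by simp [hFdef, hfx i]
    have hsF : s = ∑ i, θ (F i) * a i := by
      rw [← hsum]
      refine Finset.sum_congr rfl fun i _ => ?_
      rw [hfa i, hFdef]
      simp [map_smul, smul_mul_assoc]
    set C : ℝ := ∑ i, ‖a i‖ with hCdef
    have hC0 : 0 ≤ C := Finset.sum_nonneg fun i _ => norm_nonneg _
    have hδpos : 0 < ε / 2 / (C + 1) := by positivity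
    obtain ⟨e, hex, hnorm1e, hsmall⟩ := exists_cutoff x F hFx hδpos
    refine ⟨θ e * d, Submodule.subset_span ⟨e, d, hdB, hex, rfl⟩, ?_⟩
    rw [dist_eq_norm]
    have key : d - θ e * d = θ (1 - e) * (d - s) + θ (1 - e) * s := by
      rw [← mul_add, sub_add_cancel, map_sub, map_one, sub_mul, one_mul]
    rw [key]
    have h1 : ‖θ (1 - e) * (d - s)‖ < ε / 2 := by
      calc ‖θ (1 - e) * (d - s)‖ ≤ ‖θ (1 - e)‖ * ‖d - s‖ := norm_mul_le _ _
        _ ≤ 1 * ‖d - s‖ := by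
            apply mul_le_mul_of_nonneg_right _ (norm_nonneg _)
            exact le_trans (NonUnitalStarAlgHom.norm_apply_le θ _) hnorm1e
        _ = ‖d - s‖ := one_mul _
        _ < ε / 2 := by rw [← dist_eq_norm]; exact hds
    have h2 : ‖θ (1 - e) * s‖ ≤ ε / 2 := by
      have expand : θ (1 - e) * s = ∑ i, θ ((1 - e) * F i) * a i := by
        rw [hsF, Finset.mul_sum]
        refine Finset.sum_congr rfl fun i _ => ?_
        rw [map_mul, mul_assoc]
      rw [expand]
      calc ‖∑ i, θ ((1 - e) * F i) * a i‖ ≤ ∑ i, ‖θ ((1 - e) * F i) * a i‖ :=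
            norm_sum_le _ _
        _ ≤ ∑ i, (ε / 2 / (C + 1)) * ‖a i‖ := by
            refine Finset.sum_le_sum fun i _ => ?_
            calc ‖θ ((1 - e) * F i) * a i‖ ≤ ‖θ ((1 - e) * F i)‖ * ‖a i‖ := norm_mul_le _ _
              _ ≤ (ε / 2 / (C + 1)) * ‖a i‖ := by
                  apply mul_le_mul_of_nonneg_right _ (norm_nonneg _)
                  exact le_trans (NonUnitalStarAlgHom.norm_apply_le θ _) (hsmall i)
        _ = (ε / 2 / (C + 1)) * C := by rw [← Finset.mul_sum]
        _ ≤ ε / 2 := by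
            rw [div_mul_eq_mul_div, div_le_iff₀ (by positivity)]
            nlinarith [hε]
    calc ‖θ (1 - e) * (d - s) + θ (1 - e) * s‖
        ≤ ‖θ (1 - e) * (d - s)‖ + ‖θ (1 - e) * s‖ := norm_add_le _ _
      _ < ε / 2 + ε / 2 := by linarith
      _ = ε := by ring
  · -- easy direction
    intro d hd
    constructor
    · -- closure of span lands in B
      let Bsub : Submodule ℂ D :=
        { carrier := B
          add_mem' := fun ha hb => B.add_mem ha hb
          zero_mem' := B.zero_mem
          smul_mem' := fun c a ha => by
            rw [Algebra.smul_def]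
            exact B.mul_mem_left _ _ ha }
      have hle : Submodule.span ℂ
          {y : D | ∃ (f : C(X, ℂ)), ∃ b ∈ B, f x = 0 ∧ y = θ f * b} ≤ Bsub :=
        Submodule.span_le.mpr (by rintro y ⟨f, b, hb, _, rfl⟩; exact B.mul_mem_left _ _ hb)
      exact closure_minimal (fun y hy => hle hy) hBclosed hd
    · -- closure of span lands in fiberIdeal
      refine closure_mono (Submodule.span_mono ?_) hd
      rintro y ⟨f, b, _, hfx, rfl⟩
      exact ⟨f, b, hfx, rfl⟩
end

section
/- Let ℕ∞ = ℕ ∪ {∞} be the one-point (Alexandroff) compactification of the natural numbers and let A = C(ℕ∞, ℂ × ℂ) be the C*-algebra of continuous functions from ℕ∞ to ℂ × ℂ with pointwise operations and supremum norm. Define a ∈ A by a(n) = (1/(n+1), 0) for n even, a(n) = (0, 1/(n+1)) for n odd, and a(∞) = (0, 0). Then there is no map Φ : A → C(ℕ∞, ℂ) which is ℂ-linear, C(ℕ∞)-linear (Φ(f·F) = f·Φ(F) for every f ∈ C(ℕ∞, ℂ) and F ∈ A, where f·F denotes pointwise scalar multiplication), unital (Φ(1) = 1), positive (Φ(F*F)(x)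 ≥ 0 for all F ∈ A and x ∈ ℕ∞), and satisfies Φ(a)(n) = 1/(n+1) for every n ∈ ℕ. -/
open scoped ComplexOrder
open Filter

open Classical in
noncomputable def eIndic (n : ℕ) : C(OnePoint ℕ, ℂ) :=
  ⟨fun x => if x = OnePoint.some n then 1 else 0, by
    have hop : IsOpen ({OnePoint.some n} : Set (OnePoint ℕ)) := by
      have := OnePoint.isOpenEmbedding_coe (X := ℕ) |>.isOpenMap {n} trivial
      simpa using this
    apply IsLocallyConstant.continuous
    intro s
    by_cases h1 : (1:ℂ) ∈ s <;> by_cases h0 : (0:ℂ) ∈ s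
    · convert isOpen_univ
      ext x; by_cases hx : x = OnePoint.some n <;> simp [hx, h1, h0]
    · convert hop
      ext x; by_cases hx : x = OnePoint.some n <;> simp [hx, h1, h0]
    · have : IsOpen ({OnePoint.some n}ᶜ : Set (OnePoint ℕ)) := isClosed_singleton.isOpen_compl
      convert this
      ext x; by_cases hx : x = OnePoint.some n <;> simp [hx, h1, h0]
    · convert isOpen_empty
      ext x; by_cases hx : x = OnePoint.some n <;> simp [hx, h1, h0]⟩

open Classical in
theorem eIndic_apply (n : ℕ) (x : OnePoint ℕ) :
    eIndic n x = if x = OnePoint.some n then 1 else 0 := rfl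

/-- Bauval's counterexample: on the one-point compactification `ℕ∞` of `ℕ`, with
`A = C(ℕ∞, ℂ × ℂ)` and `a ∈ A` given by `a(n) = (1/(n+1), 0)` for `n` even,
`a(n) = (0, 1/(n+1))` for `n` odd and `a(∞) = 0`, there is no continuous field of states
`Φ : A → C(ℕ∞)` (i.e. `ℂ`-linear, `C(ℕ∞)`-linear, unital and positive map) with
`Φ(a)(n) = 1/(n+1)` for every `n ∈ ℕ`. -/
theorem no_continuous_field_of_states_extension
    (a : C(OnePoint ℕ, ℂ × ℂ))
    (ha_even : ∀ n : ℕ, Even n → a (OnePoint.some n) = (1 / ((n : ℂ) + 1), 0))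
    (ha_odd : ∀ n : ℕ, ¬ Even n → a (OnePoint.some n) = (0, 1 / ((n : ℂ) + 1)))
    (ha_inf : a OnePoint.infty = 0) :
    ¬ ∃ Φ : C(OnePoint ℕ, ℂ × ℂ) →ₗ[ℂ] C(OnePoint ℕ, ℂ),
      Φ 1 = 1 ∧
      (∀ (f : C(OnePoint ℕ, ℂ)) (F : C(OnePoint ℕ, ℂ × ℂ)), Φ (f • F) = f * Φ F) ∧
      (∀ (F : C(OnePoint ℕ, ℂ × ℂ)) (x : OnePoint ℕ), 0 ≤ Φ (star F * F) x) ∧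
      (∀ n : ℕ, Φ a (OnePoint.some n) = 1 / ((n : ℂ) + 1)) := by
  rintro ⟨Φ, hunit, hmod, -, hval⟩
  classical
  set c : C(OnePoint ℕ, ℂ × ℂ) := ContinuousMap.const _ ((1, 0) : ℂ × ℂ) with hc
  set c' : C(OnePoint ℕ, ℂ × ℂ) := ContinuousMap.const _ ((0, 1) : ℂ × ℂ) with hc'
  have hcc' : c + c' = 1 := by
    ext x <;> simp [hc, hc']
  set g : C(OnePoint ℕ, ℂ) := Φ c with hg
  have hne : ∀ n : ℕ, ((n : ℂ) + 1) ≠ 0 := fun n => Nat.cast_add_one_ne_zero n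
  -- even case
  have heven : ∀ n : ℕ, Even n → g (OnePoint.some n) = 1 := by
    intro n hn
    have key : eIndic n • a = (((n : ℂ) + 1)⁻¹ • eIndic n) • c := by
      refine ContinuousMap.ext fun x => ?_
      rw [ContinuousMap.smul_apply', ContinuousMap.smul_apply', ContinuousMap.smul_apply]
      by_cases hx : x = OnePoint.some n
      · subst hx
        rw [ha_even n hn, eIndic_apply, if_pos rfl]
        simp [hc, Prod.smul_def, one_div]
      · rw [eIndic_apply, if_neg hx]
        simp
    have := congrArg Φ key
    rw [hmod, hmod] at this
    have h2 := congrFun (congrArg DFunLike.coe this) (OnePoint.some n)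
    simp only [ContinuousMap.mul_apply, eIndic_apply, if_pos rfl, hval n,
      ContinuousMap.smul_apply, smul_eq_mul] at h2
    rw [one_div] at h2
    field_simp at h2
    simpa using h2.symm
  -- odd case
  have hodd : ∀ n : ℕ, ¬ Even n → g (OnePoint.some n) = 0 := by
    intro n hn
    have key : eIndic n • a = (((n : ℂ) + 1)⁻¹ • eIndic n) • c' := by
      refine ContinuousMap.ext fun x => ?_
      rw [ContinuousMap.smul_apply', ContinuousMap.smul_apply', ContinuousMap.smul_apply]
      by_cases hx : x = OnePoint.some n
      · subst hx
        rw [ha_odd n hn, eIndic_apply, if_pos rfl]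
        simp [hc', Prod.smul_def, one_div]
      · rw [eIndic_apply, if_neg hx]
        simp
    have := congrArg Φ key
    rw [hmod, hmod] at this
    have h2 := congrFun (congrArg DFunLike.coe this) (OnePoint.some n)
    simp only [ContinuousMap.mul_apply, eIndic_apply, if_pos rfl, hval n,
      ContinuousMap.smul_apply, smul_eq_mul] at h2
    rw [one_div] at h2
    field_simp at h2
    have hΦc' : Φ c' (OnePoint.some n) = 1 := by simpa using h2.symm
    have hsum : g (OnePoint.some n) + Φ c' (OnePoint.some n) = 1 := by
      have : Φ c + Φ c' = 1 := by rw [← map_add, hcc', hunit]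
      have := congrFun (congrArg DFunLike.coe this) (OnePoint.some n)
      simpa using this
    rw [hΦc'] at hsum
    linear_combination hsum
  -- contradiction via continuity at infinity
  have hcoe : Tendsto (fun n : ℕ => (OnePoint.some n : OnePoint ℕ)) atTop
      (nhds OnePoint.infty) := by
    have := OnePoint.tendsto_coe_infty (X := ℕ)
    rwa [coclosedCompact_eq_cocompact, cocompact_eq_atTop] at this
  have htend : Tendsto (fun n : ℕ => g (OnePoint.some n)) atTop (nhds (g OnePoint.infty)) :=
    (g.continuous.tendsto _).comp hcoe
  have h2k : Tendsto (fun k : ℕ => (2 * k : ℕ)) atTop atTop :=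
    tendsto_atTop_atTop.mpr fun b => ⟨b, fun a ha => by omega⟩
  have h2k1 : Tendsto (fun k : ℕ => (2 * k + 1 : ℕ)) atTop atTop :=
    tendsto_atTop_atTop.mpr fun b => ⟨b, fun a ha => by omega⟩
  have he : Tendsto (fun k : ℕ => g (OnePoint.some (2 * k))) atTop (nhds (g OnePoint.infty)) :=
    htend.comp h2k
  have ho : Tendsto (fun k : ℕ => g (OnePoint.some (2 * k + 1))) atTop (nhds (g OnePoint.infty)) :=
    htend.comp h2k1
  have he1 : (fun k : ℕ => g (OnePoint.some (2 * k))) = fun _ => (1 : ℂ) := by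
    funext k; exact heven _ ⟨k, by ring⟩
  have ho0 : (fun k : ℕ => g (OnePoint.some (2 * k + 1))) = fun _ => (0 : ℂ) := by
    funext k; exact hodd _ (by simp [Nat.even_add_one, parity_simps])
  rw [he1] at he
  rw [ho0] at ho
  have e1 : g OnePoint.infty = 1 := tendsto_nhds_unique he tendsto_const_nhds
  have e0 : g OnePoint.infty = 0 := tendsto_nhds_unique ho tendsto_const_nhds
  rw [e1] at e0
  exact one_ne_zero e0
end
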